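/- Let K be a field of characteristic 0 with a group homomorphism ex : K⁺ → K^* satisfying the Schanuel property, and pick x₁ transcendental over ℚ. Define x_{i+1} = ex(x_i) for i = 1,…,n−1, and suppose ex(x_n) ∈ ℚ. Then trdeg_ℚ(x₁,…,xₙ) ≤ n, and if in addition x₁,…,xₙ are ℚ-linearly independent, trdeg_ℚ(x₁,…,xₙ) = n. -/

import Mathlib

/-!
The exponentials of `x₁, …, xₙ` are `x₂, …, xₙ` and the rational number `ex(xₙ)`, so the field
generated by the `xᵢ` and their exponentials is generated by the `xᵢ` alone up to an algebraic
element, which cannot lie in an algebraically independent set. Hence Schanuel's lower bound for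
the larger set is a lower bound for `trdeg_ℚ(x₁, …, xₙ)`, while `n` is trivially an upper bound.
-/

/-- Transcendence degree over `ℚ` of a subset `S` of a field of characteristic zero. -/
noncomputable def trdegQ {K : Type} [Field K] [CharZero K] (S : Set K) : ℕ :=
  sSup {n | ∃ t : Finset K, ↑t ⊆ S ∧ t.card = n ∧
    AlgebraicIndependent ℚ (fun x : (t : Set K) => (x : K))}

/-- The Schanuel property for `ex : K → K`. -/
def SchanuelProperty {K : Type} [Field K] [CharZero K] (ex : K → K) : Prop :=
  ∀ (n : ℕ) (x : Fin n → K), LinearIndependent ℚ x →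
    n ≤ trdegQ (Set.range x ∪ Set.range (ex ∘ x))

section trdegQ

variable {K : Type} [Field K] [CharZero K]

theorem trdegQ_le_ncard {S : Set K} (hS : S.Finite) : trdegQ S ≤ S.ncard := by
  refine csSup_le' ?_
  rintro m ⟨t, ht, rfl, -⟩
  simpa using Set.ncard_le_ncard ht hS

theorem card_le_trdegQ {S : Set K} (hS : S.Finite) {t : Finset K} (ht : ↑t ⊆ S)
    (hind : AlgebraicIndependent ℚ (fun x : (t : Set K) => (x : K))) : t.card ≤ trdegQ S := by
  refine le_csSup ⟨S.ncard, ?_⟩ ⟨t, ht, rfl, hind⟩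
  rintro m ⟨s, hs, rfl, -⟩
  simpa using Set.ncard_le_ncard hs hS

theorem trdegQ_range_le {ι : Type*} [Fintype ι] (x : ι → K) :
    trdegQ (Set.range x) ≤ Fintype.card ι := by
  refine (trdegQ_le_ncard (Set.finite_range x)).trans ?_
  rw [← Set.image_univ, ← Nat.card_eq_fintype_card, ← Set.ncard_univ]
  exact Set.ncard_image_le Set.finite_univ

theorem trdegQ_le_of_subset_union_algebraic {S T : Set K} (hT : T.Finite)
    (hST : S ⊆ T ∪ {a | IsAlgebraic ℚ a}) : trdegQ S ≤ trdegQ T := by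
  refine csSup_le' ?_
  rintro m ⟨t, ht, rfl, hind⟩
  refine card_le_trdegQ hT (fun a ha => ?_) hind
  rcases hST (ht ha) with haT | halg
  · exact haT
  · exact absurd halg (hind.transcendental ⟨a, ha⟩)

end trdegQ

theorem range_comp_subset_insert_range {α : Type*} (f : α → α) {n : ℕ} (hn : 1 ≤ n)
    (x : Fin n → α)
    (hstep : ∀ (i : ℕ) (h : i + 1 < n), x ⟨i + 1, h⟩ = f (x ⟨i, Nat.lt_of_succ_lt h⟩)) :
    Set.range (f ∘ x) ⊆ insert (f (x ⟨n - 1, Nat.sub_lt hn Nat.one_pos⟩)) (Set.range x) := by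
  rintro _ ⟨i, rfl⟩
  by_cases hi : i.val + 1 < n
  · exact Or.inr ⟨⟨i.val + 1, hi⟩, hstep i.val hi⟩
  · have hlast : i = ⟨n - 1, Nat.sub_lt hn Nat.one_pos⟩ := Fin.ext (by simp only; omega)
    exact Or.inl (by rw [Function.comp_apply, hlast])

theorem stmt12_general {K : Type} [Field K] [CharZero K]
    (ex : K → K)
    (hSC : SchanuelProperty ex)
    (n : ℕ) (hn : 1 ≤ n) (x : Fin n → K)
    (hstep : ∀ (i : ℕ) (h : i + 1 < n), x ⟨i + 1, h⟩ = ex (x ⟨i, Nat.lt_of_succ_lt h⟩))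
    (hlast : ∃ q : ℚ, ex (x ⟨n - 1, Nat.sub_lt hn Nat.one_pos⟩) = (q : K)) :
    trdegQ (Set.range x) ≤ n ∧
      (LinearIndependent ℚ x → trdegQ (Set.range x) = n) := by
  obtain ⟨q, hq⟩ := hlast
  have hupper : trdegQ (Set.range x) ≤ n := by simpa using trdegQ_range_le x
  refine ⟨hupper, fun hlin => le_antisymm hupper ?_⟩
  have hexp : Set.range x ∪ Set.range (ex ∘ x) ⊆ Set.range x ∪ {a | IsAlgebraic ℚ a} := by
    refine Set.union_subset Set.subset_union_left fun a ha => ?_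
    rcases range_comp_subset_insert_range ex hn x hstep ha with rfl | hax
    · exact Or.inr (hq ▸ isAlgebraic_ratCast ℚ q)
    · exact Or.inl hax
  exact (hSC n x hlin).trans (trdegQ_le_of_subset_union_algebraic (Set.finite_range x) hexp)

theorem stmt12 {K : Type} [Field K] [CharZero K]
    (ex : K → K)
    (hhom : ∀ x y : K, ex (x + y) = ex x * ex y)
    (hne : ∀ x : K, ex x ≠ 0)
    (hSC : SchanuelProperty ex)
    (n : ℕ) (hn : 1 ≤ n) (x : Fin n → K)
    (htrans : Transcendental ℚ (x ⟨0, hn⟩))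
    (hstep : ∀ (i : ℕ) (h : i + 1 < n), x ⟨i + 1, h⟩ = ex (x ⟨i, Nat.lt_of_succ_lt h⟩))
    (hlast : ∃ q : ℚ, ex (x ⟨n - 1, Nat.sub_lt hn Nat.one_pos⟩) = (q : K)) :
    trdegQ (Set.range x) ≤ n ∧
      (LinearIndependent ℚ x → trdegQ (Set.range x) = n) :=
  stmt12_general ex hSC n hn x hstep hlast
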